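/- arXiv:2211.13404 — 2 statements merged into one kernel-verified Lean document; each statement's English description precedes it below -/
import Mathlib

section
/- Let m ∈ ℕ and ε > 0, and consider the sequence a_q = q^{-(m + 1/2 + ε)} for q ∈ ℕ, q ≥ C₁. Then for s ∈ [0, m], the weighted sum Σ_{q ≥ C₁} exp(-C t / q^{2(1+α)}) q^{2s} a_q² satisfies Σ_{q ≥ C₁} exp(-C t / q^{2(1+α)}) q^{-(2(m-s)+1+2ε)} ≥ c t^{-((m-s)/(1+α) + (1+2ε)/(2(1+α)))} for all t ≥ 1, with c > 0 independent of t. -/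
/-!
A single term already gives the bound: for `q ≈ t^{1/(2(1+α))}` the exponential factor is at
least `exp (-C)`, while `q^{-(2(m-s)+1+2ε)}` is comparable to
`t^{-(2(m-s)+1+2ε)/(2(1+α))}`. All terms are nonnegative and the series converges because
`2(m-s)+1+2ε > 1`.
-/

open Real

lemma summable_exp_neg_mul_rpow_neg {p : ℝ} (hp : 1 < p) (x : ℕ → ℝ) (hx : ∀ q, 0 ≤ x q)
    (P : ℕ → Prop) :
    Summable fun q : {q : ℕ // P q} => exp (-x q) * ((q : ℕ) : ℝ) ^ (-p) := by
  have hsum : Summable fun q : ℕ => (q : ℝ) ^ (-p) := summable_nat_rpow.mpr (by linarith)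
  refine (hsum.subtype {q | P q}).of_nonneg_of_le
    (fun q => by positivity) fun q => ?_
  exact mul_le_of_le_one_left (by positivity) (exp_le_one_iff.mpr (by linarith [hx q]))

lemma exists_nat_ge_le_mul {C₁ r : ℝ} (hC₁ : 0 ≤ C₁) (hr : 1 ≤ r) :
    ∃ q : ℕ, C₁ ≤ q ∧ r ≤ q ∧ (q : ℝ) ≤ (C₁ + 2) * r := by
  refine ⟨⌈max C₁ r⌉₊, (le_max_left _ _).trans (Nat.le_ceil _),
    (le_max_right _ _).trans (Nat.le_ceil _), ?_⟩
  have hceil := Nat.ceil_lt_add_one (hC₁.trans (le_max_left C₁ r))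
  have hmax : max C₁ r ≤ C₁ + r := max_le (by linarith) (by linarith)
  nlinarith

lemma exp_neg_mul_rpow_neg_le {C β p K t q : ℝ} (hC : 0 ≤ C) (hβ : 0 < β) (hp : 0 ≤ p)
    (hK : 0 < K) (ht : 0 < t) (hlow : t ^ (1 / β) ≤ q) (hupp : q ≤ K * t ^ (1 / β)) :
    exp (-C) * K ^ (-p) * t ^ (-(p / β)) ≤ exp (-(C * t / q ^ β)) * q ^ (-p) := by
  set r := t ^ (1 / β)
  have hr : 0 < r := rpow_pos_of_pos ht _
  have hq : 0 < q := hr.trans_le hlow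
  have ht_le : t ≤ q ^ β := by
    calc t = r ^ β := by rw [← rpow_mul ht.le, one_div_mul_cancel hβ.ne', rpow_one]
      _ ≤ q ^ β := rpow_le_rpow hr.le hlow hβ.le
  have hexp : exp (-C) ≤ exp (-(C * t / q ^ β)) := by
    have : C * t / q ^ β ≤ C := by
      rw [div_le_iff₀ (by positivity)]
      exact mul_le_mul_of_nonneg_left ht_le hC
    exact exp_le_exp.mpr (by linarith)
  have hpow : K ^ (-p) * t ^ (-(p / β)) ≤ q ^ (-p) := by
    calc K ^ (-p) * t ^ (-(p / β)) = (K * r) ^ (-p) := by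
          rw [mul_rpow hK.le hr.le, ← rpow_mul ht.le]
          ring_nf
      _ ≤ q ^ (-p) := rpow_le_rpow_of_nonpos hq hupp (by linarith)
  rw [mul_assoc]
  exact mul_le_mul hexp hpow (by positivity) (exp_pos _).le

theorem stmt11_general (m : ℕ) (ε : ℝ) (hε : 0 < ε) (α : ℕ)
    (C C₁ : ℝ) (hC : 0 < C) (hC₁ : 0 < C₁) (s : ℝ) (hsm : s ≤ m) :
    ∃ c : ℝ, 0 < c ∧ ∀ t : ℝ, 1 ≤ t →
      c * t ^ (-(((m : ℝ) - s) / (1 + α) + (1 + 2 * ε) / (2 * (1 + α)))) ≤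
        ∑' q : {q : ℕ // C₁ ≤ (q : ℝ)},
          Real.exp (-(C * t / ((q : ℕ) : ℝ) ^ ((2 : ℝ) * (1 + α)))) *
            ((q : ℕ) : ℝ) ^ (-(2 * ((m : ℝ) - s) + 1 + 2 * ε)) := by
  set β : ℝ := 2 * (1 + α)
  set p : ℝ := 2 * ((m : ℝ) - s) + 1 + 2 * ε
  have hβ : 0 < β := by positivity
  have hp : 1 < p := by linarith
  have hexponent : ((m : ℝ) - s) / (1 + α) + (1 + 2 * ε) / (2 * (1 + α)) = p / β := by
    field_simp
    ring
  refine ⟨exp (-C) * (C₁ + 2) ^ (-p), by positivity, fun t ht => ?_⟩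
  obtain ⟨q, hC₁q, hlow, hupp⟩ :=
    exists_nat_ge_le_mul hC₁.le (one_le_rpow ht (one_div_pos.mpr hβ).le)
  rw [hexponent]
  calc exp (-C) * (C₁ + 2) ^ (-p) * t ^ (-(p / β))
      ≤ exp (-(C * t / (q : ℝ) ^ β)) * (q : ℝ) ^ (-p) :=
        exp_neg_mul_rpow_neg_le hC.le hβ (by linarith) (by linarith) (by linarith) hlow hupp
    _ ≤ _ :=
        (summable_exp_neg_mul_rpow_neg hp (fun q : ℕ => C * t / (q : ℝ) ^ β)
          (fun _ => by positivity) (fun q : ℕ => C₁ ≤ q)).le_tsum ⟨q, hC₁q⟩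
          fun _ _ => by positivity

/-- Lower bound on the weighted lattice sum: with `a_q = q^{-(m+1/2+ε)}`, `α ∈ {0,1}`,
`s ∈ [0,m]`, there is `c > 0` independent of `t ≥ 1` such that
`Σ_{q ≥ C₁} exp(-Ct/q^{2(1+α)}) q^{-(2(m-s)+1+2ε)}
  ≥ c t^{-((m-s)/(1+α) + (1+2ε)/(2(1+α)))}`. -/
theorem stmt11 (m : ℕ) (ε : ℝ) (hε : 0 < ε) (α : ℕ) (hα : α = 0 ∨ α = 1)
    (C C₁ : ℝ) (hC : 0 < C) (hC₁ : 0 < C₁) (s : ℝ) (hs : 0 ≤ s) (hsm : s ≤ m) :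
    ∃ c : ℝ, 0 < c ∧ ∀ t : ℝ, 1 ≤ t →
      c * t ^ (-(((m : ℝ) - s) / (1 + α) + (1 + 2 * ε) / (2 * (1 + α)))) ≤
        ∑' q : {q : ℕ // C₁ ≤ (q : ℝ)},
          Real.exp (-(C * t / ((q : ℕ) : ℝ) ^ ((2 : ℝ) * (1 + α)))) *
            ((q : ℕ) : ℝ) ^ (-(2 * ((m : ℝ) - s) + 1 + 2 * ε)) :=
  stmt11_general m ε hε α C C₁ hC hC₁ s hsm
end

section
/- Let α ≥ 0, m ≥ 0, s ∈ [0, m], and let (c_η)_{η} be a family of nonnegative reals indexed by η = (ñ, q̃) with |ñ| ≥ 1. Then for all t ≥ 0: Σ_η exp(-2|ñ|² t/|η|^{2+2α}) |η|^{2s} c_η² ≤ C (1+t)^{-(m-s)/(1+α)} Σ_η |η|^{2m} c_η², where C depends only on m, s, α, provided |ñ| ≥ 1 for all indices (so |ñ|²/|η|^{2+2α} ≥ |η|^{-2(1+α)}). -/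
/-- `u ^ β ≤ β ^ β * exp u` for nonnegative `u, β` (rpow convention `0^0 = 1`). -/
lemma stmt19_rpow_le_exp {β u : ℝ} (hβ : 0 ≤ β) (hu : 0 ≤ u) :
    u ^ β ≤ β ^ β * Real.exp u := by
  rcases eq_or_lt_of_le hβ with h | hβ
  · rw [← h]
    simpa using Real.one_le_exp hu
  rcases eq_or_lt_of_le hu with h | hu
  · rw [← h, Real.zero_rpow hβ.ne']
    positivity
  · have h1 : Real.log (u / β) ≤ u / β - 1 :=
      Real.log_le_sub_one_of_pos (by positivity)
    have h2 : Real.log (u / β) = Real.log u - Real.log β := Real.log_div hu.ne' hβ.ne'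
    have h3 : β * Real.log u ≤ β * Real.log β + u := by
      have h4 : Real.log u - Real.log β ≤ u / β - 1 := h2 ▸ h1
      have h5 : β * (Real.log u - Real.log β) ≤ β * (u / β - 1) :=
        mul_le_mul_of_nonneg_left h4 hβ.le
      have h6 : β * (u / β - 1) ≤ u := by
        rw [mul_sub, mul_div_cancel₀ _ hβ.ne']
        nlinarith
      nlinarith
    calc u ^ β = Real.exp (Real.log u * β) := by
          rw [Real.rpow_def_of_pos hu]
      _ ≤ Real.exp (β * Real.log β + u) := Real.exp_le_exp.mpr (by nlinarith)
      _ = β ^ β * Real.exp u := by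
          rw [Real.exp_add, Real.rpow_def_of_pos hβ, mul_comm (Real.log β) β]

/-- Pointwise exponential-to-algebraic decay bound. -/
lemma stmt19_ptwise (α m s : ℝ) (hα : 0 ≤ α) (hs : 0 ≤ s) (hsm : s ≤ m)
    (X n2 t : ℝ) (hX : 1 ≤ X) (hn2 : 1 ≤ n2) (ht : 0 ≤ t) :
    Real.exp (-(2 * n2 * t / X ^ (1 + α))) * X ^ s ≤
      Real.exp 2 * max 1 (((m - s) / (1 + α)) ^ ((m - s) / (1 + α))) *
        (1 + t) ^ (-((m - s) / (1 + α))) * X ^ m := by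
  have h1α : (0:ℝ) < 1 + α := by linarith
  set β := (m - s) / (1 + α) with hβd
  have hβ : 0 ≤ β := div_nonneg (by linarith) h1α.le
  have hX0 : (0:ℝ) < X := by linarith
  set Y := X ^ (1 + α) with hYd
  have hY : 1 ≤ Y := by
    have := Real.rpow_le_rpow_of_exponent_le hX (show (0:ℝ) ≤ 1 + α by linarith)
    rwa [Real.rpow_zero] at this
  have hY0 : (0:ℝ) < Y := by linarith
  set u := (1 + t) / Y with hud
  have hu : 0 < u := by positivity
  -- exponential chain: exp(-2 n2 t / Y) ≤ exp 2 * exp (-2u)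
  have e12 : Real.exp (-(2 * n2 * t / Y)) ≤ Real.exp 2 * Real.exp (-(2 * u)) := by
    rw [← Real.exp_add]
    apply Real.exp_le_exp.mpr
    have h2Y : 2 / Y ≤ 2 := by
      rw [div_le_iff₀ hY0]; nlinarith
    have hB : 2 * t / Y ≤ 2 * n2 * t / Y := by
      rw [div_le_div_iff₀ hY0 hY0]
      nlinarith [mul_nonneg (mul_nonneg (by linarith : (0:ℝ) ≤ n2 - 1) ht) hY0.le]
    have heq : 2 * u = 2 / Y + 2 * t / Y := by
      rw [hud]; field_simp
    linarith
  -- exp(-2u) ≤ β^β * u^(-β)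
  have e4 : Real.exp (-(2 * u)) ≤ β ^ β * u ^ (-β) := by
    have huβ : (0:ℝ) < u ^ β := Real.rpow_pos_of_pos hu β
    have key : Real.exp (-(2 * u)) * u ^ β ≤ β ^ β := by
      calc Real.exp (-(2 * u)) * u ^ β
          ≤ Real.exp (-(2 * u)) * (β ^ β * Real.exp u) :=
            mul_le_mul_of_nonneg_left (stmt19_rpow_le_exp hβ hu.le) (Real.exp_pos _).le
        _ = β ^ β * (Real.exp (-(2 * u)) * Real.exp u) := by ring
        _ = β ^ β * Real.exp (-u) := by
            rw [← Real.exp_add]; congr 1; ring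
        _ ≤ β ^ β * 1 := by
            apply mul_le_mul_of_nonneg_left _ (Real.rpow_nonneg hβ β)
            exact Real.exp_le_one_iff.mpr (by linarith)
        _ = β ^ β := mul_one _
    rw [Real.rpow_neg hu.le]
    calc Real.exp (-(2 * u)) = Real.exp (-(2 * u)) * u ^ β * (u ^ β)⁻¹ := by
          field_simp
      _ ≤ β ^ β * (u ^ β)⁻¹ := by
          apply mul_le_mul_of_nonneg_right key
          positivity
  -- algebra: X^s = X^m * Y^(-β)
  have hex : m + (1 + α) * -β = s := by
    rw [hβd]
    field_simp
    ring
  have hXm : X ^ s = X ^ m * Y ^ (-β) := by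
    rw [hYd, ← Real.rpow_mul hX0.le, ← Real.rpow_add hX0, hex]
  -- u^(-β) = (1+t)^(-β) * Y^β
  have huβeq : u ^ (-β) = (1 + t) ^ (-β) * Y ^ β := by
    rw [hud, Real.div_rpow (by linarith) hY0.le, Real.rpow_neg hY0.le, div_eq_mul_inv, inv_inv]
  -- combine
  have e5 : Real.exp (-(2 * u)) * Y ^ (-β) ≤ β ^ β * (1 + t) ^ (-β) := by
    calc Real.exp (-(2 * u)) * Y ^ (-β)
        ≤ β ^ β * u ^ (-β) * Y ^ (-β) :=
          mul_le_mul_of_nonneg_right e4 (Real.rpow_nonneg hY0.le _)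
      _ = β ^ β * (1 + t) ^ (-β) * (Y ^ β * Y ^ (-β)) := by rw [huβeq]; ring
      _ = β ^ β * (1 + t) ^ (-β) := by
          rw [← Real.rpow_add hY0]
          simp
  calc Real.exp (-(2 * n2 * t / Y)) * X ^ s
      = Real.exp (-(2 * n2 * t / Y)) * Y ^ (-β) * X ^ m := by rw [hXm]; ring
    _ ≤ Real.exp 2 * Real.exp (-(2 * u)) * Y ^ (-β) * X ^ m := by
        have h := mul_le_mul_of_nonneg_right
          (mul_le_mul_of_nonneg_right e12 (Real.rpow_nonneg hY0.le (-β)))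
          (Real.rpow_nonneg hX0.le m)
        linarith
    _ = Real.exp 2 * (Real.exp (-(2 * u)) * Y ^ (-β)) * X ^ m := by ring
    _ ≤ Real.exp 2 * (β ^ β * (1 + t) ^ (-β)) * X ^ m := by
        apply mul_le_mul_of_nonneg_right _ (Real.rpow_nonneg hX0.le m)
        exact mul_le_mul_of_nonneg_left e5 (Real.exp_pos 2).le
    _ = Real.exp 2 * β ^ β * (1 + t) ^ (-β) * X ^ m := by ring
    _ ≤ Real.exp 2 * max 1 (β ^ β) * (1 + t) ^ (-β) * X ^ m := by
        have h1 : β ^ β ≤ max 1 (β ^ β) := le_max_right _ _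
        have h2 : (0:ℝ) ≤ (1 + t) ^ (-β) := Real.rpow_nonneg (by linarith) _
        have h3 : (0:ℝ) ≤ X ^ m := Real.rpow_nonneg hX0.le m
        have h4 := mul_le_mul_of_nonneg_right (mul_le_mul_of_nonneg_right
          (mul_le_mul_of_nonneg_left h1 (Real.exp_pos 2).le) h2) h3
        linarith

/-- Weighted summation version of the exponential-to-algebraic decay conversion:
for `α ≥ 0`, `0 ≤ s ≤ m`, there is `C > 0` depending only on `m, s, α` such that for any
family `(c_η)` of nonnegative reals indexed by `η = (ñ, q̃)` with `|ñ| ≥ 1` (and summable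
`H^m`-type weighted sum), and all `t ≥ 0`:
`Σ_η exp(-2|ñ|²t/|η|^{2+2α}) |η|^{2s} c_η² ≤ C (1+t)^{-(m-s)/(1+α)} Σ_η |η|^{2m} c_η²`,
where `|η|² = |ñ|² + q̃²`. -/
theorem stmt19 (α m s : ℝ) (hα : 0 ≤ α) (hm : 0 ≤ m) (hs : 0 ≤ s) (hsm : s ≤ m) :
    ∃ C : ℝ, 0 < C ∧
      ∀ (ι : Type) (nn qq c : ι → ℝ),
        (∀ η, 0 ≤ c η) → (∀ η, 1 ≤ nn η) →
        Summable (fun η => ((nn η) ^ 2 + (qq η) ^ 2) ^ m * (c η) ^ 2) →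
        ∀ t : ℝ, 0 ≤ t →
          (∑' η, Real.exp (-(2 * (nn η) ^ 2 * t / ((nn η) ^ 2 + (qq η) ^ 2) ^ (1 + α)))
              * ((nn η) ^ 2 + (qq η) ^ 2) ^ s * (c η) ^ 2)
            ≤ C * (1 + t) ^ (-(m - s) / (1 + α)) *
                ∑' η, ((nn η) ^ 2 + (qq η) ^ 2) ^ m * (c η) ^ 2 := by
  set β := (m - s) / (1 + α) with hβd
  refine ⟨Real.exp 2 * max 1 (β ^ β), by positivity, ?_⟩
  intro ι nn qq c hc hnn hS t ht
  set C := Real.exp 2 * max 1 (β ^ β) with hCd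
  have hβ : 0 ≤ β := div_nonneg (by linarith) (by linarith)
  have hexp : -(m - s) / (1 + α) = -β := by rw [hβd, neg_div]
  rw [hexp]
  have hXpos : ∀ η, 1 ≤ (nn η) ^ 2 + (qq η) ^ 2 := fun η => by
    nlinarith [hnn η, sq_nonneg (qq η)]
  have key : ∀ η,
      Real.exp (-(2 * (nn η) ^ 2 * t / ((nn η) ^ 2 + (qq η) ^ 2) ^ (1 + α)))
          * ((nn η) ^ 2 + (qq η) ^ 2) ^ s * (c η) ^ 2
        ≤ C * (1 + t) ^ (-β) * (((nn η) ^ 2 + (qq η) ^ 2) ^ m * (c η) ^ 2) := by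
    intro η
    have hn2 : 1 ≤ (nn η) ^ 2 := by nlinarith [hnn η]
    have h := stmt19_ptwise α m s hα hs hsm ((nn η) ^ 2 + (qq η) ^ 2) ((nn η) ^ 2) t
      (hXpos η) hn2 ht
    calc Real.exp (-(2 * (nn η) ^ 2 * t / ((nn η) ^ 2 + (qq η) ^ 2) ^ (1 + α)))
          * ((nn η) ^ 2 + (qq η) ^ 2) ^ s * (c η) ^ 2
        ≤ Real.exp 2 * max 1 (β ^ β) * (1 + t) ^ (-β)
            * ((nn η) ^ 2 + (qq η) ^ 2) ^ m * (c η) ^ 2 := by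
          have := mul_le_mul_of_nonneg_right h (sq_nonneg (c η))
          calc Real.exp (-(2 * (nn η) ^ 2 * t / ((nn η) ^ 2 + (qq η) ^ 2) ^ (1 + α)))
              * ((nn η) ^ 2 + (qq η) ^ 2) ^ s * (c η) ^ 2
              = (Real.exp (-(2 * (nn η) ^ 2 * t / ((nn η) ^ 2 + (qq η) ^ 2) ^ (1 + α)))
                  * ((nn η) ^ 2 + (qq η) ^ 2) ^ s) * (c η) ^ 2 := by ring
            _ ≤ (Real.exp 2 * max 1 (β ^ β) * (1 + t) ^ (-β)
                  * ((nn η) ^ 2 + (qq η) ^ 2) ^ m) * (c η) ^ 2 := this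
            _ = Real.exp 2 * max 1 (β ^ β) * (1 + t) ^ (-β)
                  * ((nn η) ^ 2 + (qq η) ^ 2) ^ m * (c η) ^ 2 := by ring
      _ = C * (1 + t) ^ (-β) * (((nn η) ^ 2 + (qq η) ^ 2) ^ m * (c η) ^ 2) := by
          rw [hCd]; ring
  have hS2 : Summable (fun η =>
      C * (1 + t) ^ (-β) * (((nn η) ^ 2 + (qq η) ^ 2) ^ m * (c η) ^ 2)) :=
    hS.mul_left _
  have hS1 : Summable (fun η =>
      Real.exp (-(2 * (nn η) ^ 2 * t / ((nn η) ^ 2 + (qq η) ^ 2) ^ (1 + α)))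
          * ((nn η) ^ 2 + (qq η) ^ 2) ^ s * (c η) ^ 2) := by
    apply Summable.of_nonneg_of_le ?_ key hS2
    intro η
    have h1 := (Real.exp_pos (-(2 * (nn η) ^ 2 * t / ((nn η) ^ 2 + (qq η) ^ 2) ^ (1 + α)))).le
    have h2 : (0:ℝ) ≤ ((nn η) ^ 2 + (qq η) ^ 2) ^ s :=
      Real.rpow_nonneg (by nlinarith [hXpos η]) s
    positivity
  calc (∑' η, Real.exp (-(2 * (nn η) ^ 2 * t / ((nn η) ^ 2 + (qq η) ^ 2) ^ (1 + α)))
          * ((nn η) ^ 2 + (qq η) ^ 2) ^ s * (c η) ^ 2)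
      ≤ ∑' η, C * (1 + t) ^ (-β) * (((nn η) ^ 2 + (qq η) ^ 2) ^ m * (c η) ^ 2) :=
        Summable.tsum_le_tsum key hS1 hS2
    _ = C * (1 + t) ^ (-β) * ∑' η, ((nn η) ^ 2 + (qq η) ^ 2) ^ m * (c η) ^ 2 :=
        tsum_mul_left
end
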